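/- arXiv:1110.4796 — 3 statements merged into one kernel-verified Lean document; each statement's English description precedes it below -/
import Mathlib

section
/- Let K ⊆ ℝ² be a closed connected set, x₀ ∈ K, and suppose K has Hausdorff 1-density 1/2 at x₀, i.e. limsup_{r→0} H¹(K ∩ B(x₀,r))/(2r) = 1/2. For each small r > 0 pick any point x_r ∈ K ∩ ∂B(x₀,r). Then (1/r)·d_H(K ∩ closure(B(x₀,r)), segment [x_r, x₀]) → 0 as r → 0, where d_H denotes the Hausdorff distance. -/
open MeasureTheory Metric Set Filter
open scoped ENNReal Topology RealInnerProductSpace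

/-!
Fix `ε ≤ 1` and a small radius `r`, and put `t = (1 + ε² / 4) r`. The density bound gives
`H¹(K ∩ B̄(x₀, t)) < (1 + ε² / 2) r = 2t - r`. Two distinct components of `K ∩ B̄(x₀, t)` meeting
`B̄(x₀, r)` would both reach the sphere of radius `t` (boundary bumping) and so carry measure at
least `t + (t - r)`; hence `K ∩ B̄(x₀, r)` lies in a single continuum `C` through `x₀` and `x_r`.
A continuum through three points has measure at least half the perimeter of their triangle, and a
point `z` at distance `≥ ε r` from `[x₀, x_r]` has `|z - x₀| + |z - x_r| ≥ (1 + ε²) r`; so every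
point of `C` is `ε r`-close to the segment. Conversely each point of the segment is the orthogonal
projection of a point of `C`, which is then `ε r`-close to it.
-/

section Topology

variable {X : Type*} [TopologicalSpace X]

theorem IsClosed.connectedComponentIn {F : Set X} (hF : IsClosed F) (x : X) :
    IsClosed (connectedComponentIn F x) := by
  by_cases hx : x ∈ F
  · exact isClosed_of_closure_subset <|
      isPreconnected_connectedComponentIn.closure.subset_connectedComponentIn
        (subset_closure (mem_connectedComponentIn hx))
        (closure_minimal (connectedComponentIn_subset F x) hF)
  · rw [connectedComponentIn_eq_empty hx]
    exact isClosed_empty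

/-- Components of a compact Hausdorff space are intersections of clopen sets. -/
theorem IsCompact.exists_clopen_subset_of_disjoint_connectedComponentIn [T2Space X]
    {M S : Set X} (hM : IsCompact M) (hS : IsClosed S) {q : X} (hq : q ∈ M)
    (hdisj : Disjoint (connectedComponentIn M q) S) :
    ∃ V ⊆ M, q ∈ V ∧ IsCompact V ∧ IsCompact (M \ V) ∧ Disjoint V S := by
  have := isCompact_iff_compactSpace.mp hM
  have : Nonempty {W : Set M // IsClopen W ∧ ⟨q, hq⟩ ∈ W} :=
    ⟨⟨univ, isClopen_univ, mem_univ _⟩⟩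
  have hempty : ((↑) ⁻¹' S : Set M) ∩
      ⋂ W : {W : Set M // IsClopen W ∧ ⟨q, hq⟩ ∈ W}, (W : Set M) = ∅ := by
    rw [← connectedComponent_eq_iInter_isClopen, ← disjoint_iff_inter_eq_empty, disjoint_right]
    intro p hp hpS
    rw [connectedComponentIn_eq_image hq] at hdisj
    exact hdisj.ne_of_mem ⟨p, hp, rfl⟩ hpS rfl
  obtain ⟨⟨W, hW, hqW⟩, hWS⟩ :=
    (hS.preimage continuous_subtype_val).isCompact.elim_directed_family_closed _
      (fun W => W.2.1.isClosed) hempty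
      fun W₁ W₂ => ⟨⟨W₁ ∩ W₂, W₁.2.1.inter W₂.2.1, W₁.2.2, W₂.2.2⟩,
        inter_subset_left, inter_subset_right⟩
  refine ⟨(↑) '' W, by simp, ⟨_, hqW, rfl⟩, hW.isClosed.isCompact.image continuous_subtype_val,
    ?_, ?_⟩
  · have hMW : M \ (↑) '' W = (↑) '' Wᶜ := by
      rw [image_compl_eq_range_sdiff_image Subtype.val_injective, Subtype.range_coe]
    rw [hMW]
    exact hW.compl.isClosed.isCompact.image continuous_subtype_val
  · rw [disjoint_left]
    rintro _ ⟨p, hpW, rfl⟩ hpS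
    exact hWS.subset ⟨hpS, hpW⟩

end Topology

section MetricSpace

variable {X : Type*} [MetricSpace X]

/-- A form of the boundary bumping theorem of continuum theory. -/
theorem exists_mem_connectedComponentIn_dist_eq {K : Set X}
    (hK : IsPreconnected K) {x₀ q : X} {t : ℝ} (hM : IsCompact (K ∩ closedBall x₀ t))
    (hq : q ∈ K ∩ closedBall x₀ t) (hout : ¬ K ⊆ closedBall x₀ t) :
    ∃ p ∈ connectedComponentIn (K ∩ closedBall x₀ t) q, dist p x₀ = t := by
  by_contra! h
  obtain ⟨V, hVM, hqV, hV, hMV, hVS⟩ := hM.exists_clopen_subset_of_disjoint_connectedComponentIn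
    isClosed_sphere hq (disjoint_left.2 fun p hp hpS => h p hp hpS)
  have hVball : V ⊆ ball x₀ t := fun p hp =>
    (hVM hp).2.lt_of_ne fun e => hVS.ne_of_mem hp (mem_sphere.2 e) rfl
  set W := (K ∩ closedBall x₀ t) \ V ∪ (ball x₀ t)ᶜ
  have hcover : K ⊆ V ∪ W := by
    intro p hp
    by_cases hpb : p ∈ ball x₀ t
    · by_cases hpV : p ∈ V
      exacts [Or.inl hpV, Or.inr (Or.inl ⟨⟨hp, ball_subset_closedBall hpb⟩, hpV⟩)]
    · exact Or.inr (Or.inr hpb)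
  have hVW : K ∩ (V ∩ W) = ∅ := by
    ext p
    simp only [W, mem_inter_iff, mem_union, Set.mem_sdiff, mem_compl_iff, mem_empty_iff_false,
      iff_false]
    rintro ⟨-, hpV, (⟨-, hpV'⟩ | hpb)⟩
    exacts [hpV' hpV, hpb (hVball hpV)]
  rcases isPreconnected_iff_subset_of_disjoint_closed.1 hK V W hV.isClosed
    (hMV.isClosed.union isOpen_ball.isClosed_compl) hcover hVW with hKV | hKW
  · exact hout (hKV.trans fun p hp => (hVM hp).2)
  · rcases hKW hq.1 with hq' | hq'
    exacts [hq'.2 hqV, hq' (hVball hqV)]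

variable [MeasurableSpace X] [BorelSpace X]

theorem IsPreconnected.ofReal_le_hausdorffMeasure_inter_ball {C : Set X} (hC : IsPreconnected C)
    {w v : X} (hw : w ∈ C) (hv : v ∈ C) {ρ : ℝ} (hρ : ρ ≤ dist v w) :
    ENNReal.ofReal ρ ≤ μH[1] (C ∩ ball w ρ) := by
  have himg : Ico 0 ρ ⊆ (dist · w) '' (C ∩ ball w ρ) := by
    intro s hs
    obtain ⟨p, hpC, hps⟩ := hC.intermediate_value hw hv
      (LipschitzWith.dist_left w).continuous.continuousOn
      (show s ∈ Icc (dist w w) (dist v w) from ⟨by simpa using hs.1, hs.2.le.trans hρ⟩)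
    exact ⟨p, ⟨hpC, by simpa [mem_ball, hps] using hs.2⟩, hps⟩
  calc ENNReal.ofReal ρ = μH[1] (Ico 0 ρ) := by
        rw [hausdorffMeasure_real, Real.volume_Ico, sub_zero]
    _ ≤ μH[1] ((dist · w) '' (C ∩ ball w ρ)) := measure_mono himg
    _ ≤ μH[1] (C ∩ ball w ρ) := by
        simpa using (LipschitzWith.dist_left w).hausdorffMeasure_image_le zero_le_one (C ∩ ball w ρ)

theorem IsPreconnected.ofReal_dist_le_hausdorffMeasure {C : Set X} (hC : IsPreconnected C)
    {x y : X} (hx : x ∈ C) (hy : y ∈ C) : ENNReal.ofReal (dist x y) ≤ μH[1] C :=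
  (hC.ofReal_le_hausdorffMeasure_inter_ball hy hx le_rfl).trans (measure_mono inter_subset_left)

/-- The balls around `x`, `y`, `z` whose radii are the Gromov products are pairwise disjoint,
and each of them carries measure at least its radius. -/
theorem IsPreconnected.ofReal_perimeter_div_two_le_hausdorffMeasure {C : Set X}
    (hC : IsPreconnected C) {x y z : X} (hx : x ∈ C) (hy : y ∈ C) (hz : z ∈ C) :
    ENNReal.ofReal ((dist x y + dist y z + dist z x) / 2) ≤ μH[1] C := by
  set a := (dist x y + dist z x - dist y z) / 2 with ha
  set b := (dist x y + dist y z - dist z x) / 2 with hb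
  set c := (dist y z + dist z x - dist x y) / 2 with hc
  have hzx : dist z x ≤ dist x y + dist y z := dist_comm x z ▸ dist_triangle x y z
  have hxy : dist x y ≤ dist y z + dist z x := dist_comm y x ▸ dist_triangle y z x
  have hyz : dist y z ≤ dist z x + dist x y := dist_comm z y ▸ dist_triangle z x y
  have hBxy : Disjoint (ball x a) (ball y b) := ball_disjoint_ball (by linarith)
  have hBxz : Disjoint (ball x a) (ball z c) := ball_disjoint_ball (by rw [dist_comm]; linarith)
  have hByz : Disjoint (ball y b) (ball z c) := ball_disjoint_ball (by linarith)
  have hsum : μH[1] (C ∩ ball x a) + μH[1] (C ∩ ball y b) + μH[1] (C ∩ ball z c) ≤ μH[1] C := by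
    rw [← Measure.restrict_apply' measurableSet_ball, ← Measure.restrict_apply' measurableSet_ball,
      ← Measure.restrict_apply' measurableSet_ball, ← Measure.add_apply, ← Measure.add_apply,
      ← Measure.restrict_union hBxy measurableSet_ball,
      ← Measure.restrict_union (disjoint_union_left.2 ⟨hBxz, hByz⟩) measurableSet_ball]
    exact Measure.le_iff'.1 Measure.restrict_le_self C
  calc ENNReal.ofReal ((dist x y + dist y z + dist z x) / 2)
      = ENNReal.ofReal a + ENNReal.ofReal b + ENNReal.ofReal c := by
        rw [← ENNReal.ofReal_add (by linarith) (by linarith),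
          ← ENNReal.ofReal_add (by linarith) (by linarith)]
        congr 1
        linarith
    _ ≤ μH[1] (C ∩ ball x a) + μH[1] (C ∩ ball y b) + μH[1] (C ∩ ball z c) := by
        gcongr
        · exact hC.ofReal_le_hausdorffMeasure_inter_ball hx hy (by rw [dist_comm]; linarith)
        · exact hC.ofReal_le_hausdorffMeasure_inter_ball hy hz (by rw [dist_comm]; linarith)
        · exact hC.ofReal_le_hausdorffMeasure_inter_ball hz hx (by rw [dist_comm]; linarith)
    _ ≤ μH[1] C := hsum

/-- Two distinct components of `K ∩ B̄(x₀, t)` through `x₀` and through a point of `B̄(x₀, r)` both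
reach the sphere of radius `t`, so together they carry measure at least `t + (t - r)`. -/
theorem subset_connectedComponentIn_of_hausdorffMeasure_lt [ProperSpace X] {K : Set X}
    (hK : IsClosed K) (hKc : IsPreconnected K) {x₀ : X} (hx₀ : x₀ ∈ K) {r t : ℝ} (hrt : r ≤ t)
    (hμ : μH[1] (K ∩ closedBall x₀ t) < ENNReal.ofReal (2 * t - r)) :
    K ∩ closedBall x₀ r ⊆ connectedComponentIn (K ∩ closedBall x₀ t) x₀ := by
  set M := K ∩ closedBall x₀ t
  intro q hq
  have hM : IsCompact M := (isCompact_closedBall x₀ t).inter_left hK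
  have hqM : q ∈ M := ⟨hq.1, closedBall_subset_closedBall hrt hq.2⟩
  have hx₀M : x₀ ∈ M := ⟨hx₀, mem_closedBall_self ((dist_nonneg.trans hq.2).trans hrt)⟩
  by_cases hout : K ⊆ closedBall x₀ t
  · exact hKc.subset_connectedComponentIn hx₀ (subset_inter subset_rfl hout) hq.1
  by_contra hqC
  obtain ⟨p₀, hp₀, hp₀t⟩ := exists_mem_connectedComponentIn_dist_eq hKc hM hx₀M hout
  obtain ⟨p₁, hp₁, hp₁t⟩ := exists_mem_connectedComponentIn_dist_eq hKc hM hqM hout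
  have hdisj : Disjoint (connectedComponentIn M x₀) (connectedComponentIn M q) :=
    disjoint_left.2 fun u hu₀ hu₁ => hqC <| by
      rw [connectedComponentIn_eq hu₀, ← connectedComponentIn_eq hu₁]
      exact mem_connectedComponentIn hqM
  have h₀ : ENNReal.ofReal t ≤ μH[1] (connectedComponentIn M x₀) := by
    simpa [hp₀t] using isPreconnected_connectedComponentIn.ofReal_dist_le_hausdorffMeasure hp₀
      (mem_connectedComponentIn hx₀M)
  have h₁ : ENNReal.ofReal (t - r) ≤ μH[1] (connectedComponentIn M q) :=
    (ENNReal.ofReal_le_ofReal (by linarith [dist_triangle p₁ q x₀, mem_closedBall.1 hq.2])).trans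
      (isPreconnected_connectedComponentIn.ofReal_dist_le_hausdorffMeasure hp₁
        (mem_connectedComponentIn hqM))
  have : ENNReal.ofReal (2 * t - r) ≤ μH[1] M :=
    calc ENNReal.ofReal (2 * t - r) ≤ ENNReal.ofReal t + ENNReal.ofReal (t - r) := by
          rw [show 2 * t - r = t + (t - r) by ring]
          exact ENNReal.ofReal_add_le
      _ ≤ μH[1] (connectedComponentIn M x₀) + μH[1] (connectedComponentIn M q) :=
          add_le_add h₀ h₁
      _ = μH[1] (connectedComponentIn M x₀ ∪ connectedComponentIn M q) :=
          (measure_union hdisj (hM.isClosed.connectedComponentIn q).measurableSet).symm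
      _ ≤ μH[1] M := measure_mono (union_subset (connectedComponentIn_subset _ _)
          (connectedComponentIn_subset _ _))
  exact (this.trans_lt hμ).false

end MetricSpace

section InnerProductSpace

variable {F : Type*} [NormedAddCommGroup F] [InnerProductSpace ℝ F]

/-- Minkowski's inequality for `(h, a)` and `(h, b)` in the Euclidean plane, in squared form. -/
theorem add_sq_add_four_mul_sq_le {h a b d₁ d₂ : ℝ} (ha : 0 ≤ a) (hb : 0 ≤ b) (hd₁ : 0 ≤ d₁)
    (hd₂ : 0 ≤ d₂) (h₁ : h ^ 2 + a ^ 2 ≤ d₁ ^ 2) (h₂ : h ^ 2 + b ^ 2 ≤ d₂ ^ 2) :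
    (a + b) ^ 2 + 4 * h ^ 2 ≤ (d₁ + d₂) ^ 2 := by
  have hprod : h ^ 2 + a * b ≤ d₁ * d₂ := by
    refine (pow_le_pow_iff_left₀ (by positivity) (by positivity) two_ne_zero).1 ?_
    calc (h ^ 2 + a * b) ^ 2 ≤ (h ^ 2 + a ^ 2) * (h ^ 2 + b ^ 2) := by
          nlinarith [sq_nonneg (h * (a - b))]
      _ ≤ d₁ ^ 2 * d₂ ^ 2 := by gcongr
      _ = (d₁ * d₂) ^ 2 := by ring
  nlinarith

theorem isCompact_segment (x y : F) : IsCompact (segment ℝ x y) := by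
  rw [← convexHull_pair]
  exact (toFinite {x, y}).isCompact_convexHull ℝ

/-- Compare `z` with the point `q` of the segment nearest to it: the angles at `q` towards both
endpoints are obtuse. -/
theorem dist_sq_add_four_mul_sq_le {x y z : F} {h : ℝ} (hh : 0 ≤ h)
    (hfar : ∀ q ∈ segment ℝ x y, h ≤ dist z q) :
    dist x y ^ 2 + 4 * h ^ 2 ≤ (dist z x + dist z y) ^ 2 := by
  obtain ⟨q, hq, hmin⟩ := exists_norm_eq_iInf_of_complete_convex ⟨x, left_mem_segment ℝ x y⟩
    (isCompact_segment x y).isComplete (convex_segment x y) z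
  have hobtuse := (norm_eq_iInf_iff_real_inner_le_zero (convex_segment x y) hq).1 hmin
  have hleg : ∀ w ∈ segment ℝ x y, dist z q ^ 2 + dist w q ^ 2 ≤ dist z w ^ 2 := fun w hw => by
    rw [dist_eq_norm, dist_eq_norm, dist_eq_norm, show z - w = (z - q) - (w - q) by abel,
      norm_sub_sq_real (z - q) (w - q)]
    linarith [hobtuse w hw]
  have hh' : h ^ 2 ≤ dist z q ^ 2 := pow_le_pow_left₀ hh (hfar q hq) 2
  rw [← dist_add_dist_of_mem_segment hq, dist_comm q y]
  linarith [add_sq_add_four_mul_sq_le dist_nonneg dist_nonneg dist_nonneg dist_nonneg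
    (hleg x (left_mem_segment ℝ x y)) (hleg y (right_mem_segment ℝ x y))]

theorem dist_le_dist_add_smul_of_inner_eq_zero {w p v : F} (h : ⟪w - p, v⟫ = 0) (s : ℝ) :
    dist w p ≤ dist w (p + s • v) := by
  rw [dist_eq_norm, dist_eq_norm, show w - (p + s • v) = (w - p) - s • v by abel]
  refine (pow_le_pow_iff_left₀ (norm_nonneg _) (norm_nonneg _) two_ne_zero).1 ?_
  rw [sq, sq, norm_sub_sq_eq_norm_sq_add_norm_sq_real (x := w - p) (y := s • v)
    (by rw [real_inner_smul_right, h, mul_zero])]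
  nlinarith [norm_nonneg (s • v)]

variable [MeasurableSpace F] [BorelSpace F]

/-- If `z` were `ε |x - y|`-far from `[x, y]`, the half-perimeter of the triangle `x y z` would be
at least `(1 + ε² / 2) |x - y|`. -/
theorem IsPreconnected.exists_mem_segment_dist_lt {C : Set F} (hC : IsPreconnected C)
    {x y z : F} (hx : x ∈ C) (hy : y ∈ C) (hz : z ∈ C) {ε : ℝ} (hε : 0 ≤ ε) (hε₁ : ε ≤ 1)
    (hμ : μH[1] C < ENNReal.ofReal ((1 + ε ^ 2 / 2) * dist x y)) :
    ∃ q ∈ segment ℝ x y, dist z q < ε * dist x y := by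
  by_contra! hfar
  have hsq := dist_sq_add_four_mul_sq_le (by positivity) hfar
  have hsum : (1 + ε ^ 2) * dist x y ≤ dist z x + dist z y := by
    refine (pow_le_pow_iff_left₀ (by positivity) (by positivity) two_ne_zero).1 ?_
    have hε₂ : ε ^ 2 ≤ 2 := by nlinarith
    nlinarith [mul_nonneg (mul_nonneg (sq_nonneg ε) (sq_nonneg (dist x y))) (sub_nonneg.2 hε₂)]
  refine (hC.ofReal_perimeter_div_two_le_hausdorffMeasure hx hy hz).not_gt
    (hμ.trans_le (ENNReal.ofReal_le_ofReal ?_))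
  rw [dist_comm y z]
  linarith

/-- Choose `w ∈ C` projecting orthogonally onto `p`; then `p` is the point of the segment nearest
to `w`. -/
theorem IsPreconnected.exists_mem_dist_lt {C : Set F} (hC : IsPreconnected C)
    {x y p : F} (hx : x ∈ C) (hy : y ∈ C) (hp : p ∈ segment ℝ x y) {ε : ℝ} (hε : 0 ≤ ε)
    (hε₁ : ε ≤ 1) (hμ : μH[1] C < ENNReal.ofReal ((1 + ε ^ 2 / 2) * dist x y)) :
    ∃ w ∈ C, dist p w < ε * dist x y := by
  obtain ⟨τ, ⟨hτ₀, hτ₁⟩, rfl⟩ := (segment_eq_image' ℝ x y ▸ hp :)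
  set v := y - x
  have hproj : (0 : ℝ) ∈ Icc ⟪x - (x + τ • v), v⟫ ⟪y - (x + τ • v), v⟫ := by
    have hy' : y - (x + τ • v) = (1 - τ) • v := by simp only [v, sub_smul, one_smul]; abel
    rw [show x - (x + τ • v) = (-τ) • v by simp, hy', real_inner_smul_left,
      real_inner_smul_left]
    constructor <;> nlinarith [real_inner_self_nonneg (x := v)]
  obtain ⟨w, hwC, hw⟩ := hC.intermediate_value hx hy
    (by fun_prop : Continuous fun w : F => ⟪w - (x + τ • v), v⟫).continuousOn hproj
  obtain ⟨q, hq, hwq⟩ := hC.exists_mem_segment_dist_lt hx hy hwC hε hε₁ hμ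
  obtain ⟨σ, -, rfl⟩ := (segment_eq_image' ℝ x y ▸ hq :)
  have hqσ : x + σ • (y - x) = x + τ • v + (σ - τ) • v := by
    rw [sub_smul σ τ]
    abel
  refine ⟨w, hwC, ?_⟩
  rw [dist_comm]
  calc dist w (x + τ • v) ≤ dist w (x + σ • (y - x)) :=
        hqσ ▸ dist_le_dist_add_smul_of_inner_eq_zero hw (σ - τ)
    _ < ε * dist x y := hwq

variable [ProperSpace F]

/-- All of `K ∩ B̄(x₀, r)` lies in the component of `x₀` in `K ∩ B̄(x₀, t)`, which is a
continuum through `x₀` and `y` of measure less than `(1 + ε² / 2) r`. -/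
theorem hausdorffDist_inter_closedBall_segment_le {K : Set F} (hK : IsClosed K)
    (hKc : IsPreconnected K) {x₀ y : F} (hx₀ : x₀ ∈ K) (hy : y ∈ K) {r t ε : ℝ}
    (hyr : dist y x₀ = r) (hrt : r ≤ t) (hε : 0 ≤ ε) (hε₁ : ε ≤ 1)
    (hμt : μH[1] (K ∩ closedBall x₀ t) < ENNReal.ofReal (2 * t - r))
    (hμ : μH[1] (K ∩ closedBall x₀ t) < ENNReal.ofReal ((1 + ε ^ 2 / 2) * r)) :
    hausdorffDist (K ∩ closedBall x₀ r) (segment ℝ y x₀) ≤ ε * r := by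
  set C := connectedComponentIn (K ∩ closedBall x₀ t) x₀
  have hsub : K ∩ closedBall x₀ r ⊆ C :=
    subset_connectedComponentIn_of_hausdorffMeasure_lt hK hKc hx₀ hrt hμt
  have hr : 0 ≤ r := hyr ▸ dist_nonneg
  have hyB : y ∈ K ∩ closedBall x₀ r := ⟨hy, hyr.le⟩
  have hC : IsPreconnected C := isPreconnected_connectedComponentIn
  have hx₀C : x₀ ∈ C := hsub ⟨hx₀, mem_closedBall_self hr⟩
  have hμC : μH[1] C < ENNReal.ofReal ((1 + ε ^ 2 / 2) * dist x₀ y) := by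
    rw [dist_comm, hyr]
    exact (measure_mono (connectedComponentIn_subset _ _)).trans_lt hμ
  refine hausdorffDist_le_of_mem_dist (by positivity) (fun z hz => ?_) (fun p hp => ?_)
  · obtain ⟨q, hq, hzq⟩ := hC.exists_mem_segment_dist_lt hx₀C (hsub hyB) (hsub hz) hε hε₁ hμC
    rw [dist_comm x₀ y, hyr] at hzq
    exact ⟨q, segment_symm ℝ x₀ y ▸ hq, hzq.le⟩
  · by_cases hpy : dist p y ≤ ε * r
    · exact ⟨y, hyB, hpy⟩
    obtain ⟨w, hwC, hpw⟩ :=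
      hC.exists_mem_dist_lt hx₀C (hsub hyB) (segment_symm ℝ y x₀ ▸ hp) hε hε₁ hμC
    rw [dist_comm x₀ y, hyr] at hpw
    refine ⟨w, ⟨(connectedComponentIn_subset _ _ hwC).1, ?_⟩, hpw.le⟩
    have hpseg := dist_add_dist_of_mem_segment hp
    rw [mem_closedBall]
    linarith [dist_triangle w p x₀, dist_comm w p, dist_comm y p]

end InnerProductSpace

theorem tendsto_const_mul_nhdsGT_zero {c : ℝ} (hc : 0 < c) :
    Tendsto (c * ·) (𝓝[>] 0) (𝓝[>] 0) :=
  tendsto_nhdsWithin_of_tendsto_nhds_of_eventually_within _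
    (((continuous_const_mul c).tendsto' 0 0 (mul_zero c)).mono_left nhdsWithin_le_nhds)
    (by filter_upwards [self_mem_nhdsWithin] with r (hr : 0 < r) using mul_pos hc hr)

section Density

variable {X : Type*} [PseudoMetricSpace X] [MeasurableSpace X] {μ : Measure X} {s : Set X}
  {x : X}

theorem eventually_measure_inter_ball_lt {c : ℝ}
    (h : limsup (fun r => μ (s ∩ ball x r) / ENNReal.ofReal (2 * r)) (𝓝[>] 0) <
      ENNReal.ofReal (c / 2)) :
    ∀ᶠ r in 𝓝[>] (0 : ℝ), μ (s ∩ ball x r) < ENNReal.ofReal (c * r) := by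
  filter_upwards [eventually_lt_of_limsup_lt h, self_mem_nhdsWithin] with r hr (hr₀ : 0 < r)
  rwa [ENNReal.div_lt_iff (Or.inl (ENNReal.ofReal_pos.2 (by positivity)).ne')
    (Or.inl ENNReal.ofReal_ne_top), ← ENNReal.ofReal_mul' (by positivity),
    show c / 2 * (2 * r) = c * r by ring] at hr

/-- Compare with the open ball of radius `(1 + ε² / 3) r`, using
`(1 + ε² / 8) (1 + ε² / 3) ≤ 1 + ε² / 2`. -/
theorem eventually_measure_inter_closedBall_lt
    (h : limsup (fun r => μ (s ∩ ball x r) / ENNReal.ofReal (2 * r)) (𝓝[>] 0) ≤ 1 / 2)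
    {ε : ℝ} (hε : 0 < ε) (hε₁ : ε ≤ 1) :
    ∀ᶠ r in 𝓝[>] (0 : ℝ),
      μ (s ∩ closedBall x ((1 + ε ^ 2 / 4) * r)) < ENNReal.ofReal ((1 + ε ^ 2 / 2) * r) := by
  have hball : ∀ᶠ r in 𝓝[>] (0 : ℝ), μ (s ∩ ball x r) < ENNReal.ofReal ((1 + ε ^ 2 / 8) * r) := by
    refine eventually_measure_inter_ball_lt (h.trans_lt ?_)
    rw [ENNReal.ofReal_div_of_pos two_pos, ENNReal.ofReal_ofNat]
    exact ENNReal.div_lt_div_right (by norm_num) (by norm_num)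
      (ENNReal.one_lt_ofReal.2 (lt_add_of_pos_right _ (by positivity)))
  have hε₂ : ε ^ 2 ≤ 1 := pow_le_one₀ hε.le hε₁
  have hscale := tendsto_const_mul_nhdsGT_zero (by positivity : (0 : ℝ) < 1 + ε ^ 2 / 3)
  filter_upwards [hscale.eventually hball, self_mem_nhdsWithin] with r hμ (hr : 0 < r)
  have hradius : (1 + ε ^ 2 / 4) * r < (1 + ε ^ 2 / 3) * r := by
    nlinarith [mul_pos (pow_pos hε 2) hr]
  calc _ ≤ μ (s ∩ ball x ((1 + ε ^ 2 / 3) * r)) :=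
        measure_mono (inter_subset_inter_right _ (closedBall_subset_ball hradius))
    _ < _ := hμ
    _ ≤ _ := ENNReal.ofReal_le_ofReal <| by
        nlinarith [mul_nonneg (mul_nonneg (sq_nonneg ε) (sub_nonneg.2 hε₂)) hr.le]

end Density

/-- If `K ⊆ ℝ²` is closed, connected, has Hausdorff 1-density 1/2 at `x₀ ∈ K`,
and `x r` is a choice of point of `K ∩ ∂B(x₀,r)` for all small `r > 0`, then
`(1/r) d_H(K ∩ closure B(x₀,r), [x r, x₀]) → 0` as `r → 0⁺`. -/
theorem stmt0
    (K : Set (EuclideanSpace ℝ (Fin 2))) (x₀ : EuclideanSpace ℝ (Fin 2))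
    (hK : IsClosed K) (hKconn : IsConnected K) (hx₀ : x₀ ∈ K)
    (hdens : Filter.limsup
      (fun r : ℝ => μH[1] (K ∩ Metric.ball x₀ r) / ENNReal.ofReal (2 * r))
      (𝓝[>] (0:ℝ)) = 1/2)
    (x : ℝ → EuclideanSpace ℝ (Fin 2))
    (hx : ∀ᶠ r in 𝓝[>] (0:ℝ), x r ∈ K ∩ Metric.sphere x₀ r) :
    Tendsto
      (fun r : ℝ =>
        (1/r) * Metric.hausdorffDist (K ∩ Metric.closedBall x₀ r) (segment ℝ (x r) x₀))
      (𝓝[>] (0:ℝ)) (𝓝 0) := by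
  rw [Metric.tendsto_nhds]
  intro ε₀ hε₀
  set ε := min (ε₀ / 2) 1
  have hε : 0 < ε := lt_min (half_pos hε₀) one_pos
  have hε₁ : ε ≤ 1 := min_le_right _ _
  filter_upwards [eventually_measure_inter_closedBall_lt hdens.le hε hε₁, hx, self_mem_nhdsWithin]
    with r hμ ⟨hxK, hxr⟩ (hr : 0 < r)
  have hd := hausdorffDist_inter_closedBall_segment_le hK hKconn.isPreconnected hx₀ hxK hxr
    (by nlinarith [mul_pos (pow_pos hε 2) hr]) hε.le hε₁ (by convert hμ using 2; ring) hμ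
  rw [Real.dist_0_eq_abs, abs_of_nonneg (mul_nonneg (by positivity) hausdorffDist_nonneg)]
  calc 1 / r * hausdorffDist (K ∩ closedBall x₀ r) (segment ℝ (x r) x₀) ≤ 1 / r * (ε * r) := by
        gcongr
    _ = ε := by field_simp
    _ < ε₀ := (min_le_left _ _).trans_lt (half_lt_self hε₀)
end

section
/- Let θ : (0,1] → ℝ be C¹ with t·θ'(t) → 0 as t → 0. Define the spiral curve γ(t) = t·(cos θ(t), sin θ(t)) and K = closure(γ((0,1])) ∪ {0}. Then H¹(K ∩ B(0,r)) = ∫₀^r √(1 + t²θ'(t)²) dt = r + o(r) as r → 0; in particular K has Hausdorff 1-density 1/2 at the origin: lim_{r→0} H¹(K ∩ B(0,r))/(2r) = 1/2. -/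
/-!
For an injective Lipschitz curve `γ`, the function `L y = H¹(γ [a, y])` is additive along the
parameter, and on a short interval `[c, d]` on which `γ'` stays `ε`-close to a vector `v` it is
squeezed between `(‖v‖ - ε) (d - c)` (the chord `γ d - γ c`, by connectedness) and
`(‖v‖ + ε) (d - c)` (a Lipschitz bound). Hence `L' = ‖γ'‖` in the interior, and `L b = ∫ₐᵇ ‖γ'‖`.

For the spiral, `‖γ'(t)‖ = √(1 + (t θ'(t))²) → 1` as `t → 0⁺`. This makes `γ` Lipschitz up to the
origin, and makes the average of `‖γ'‖` over `[0, r]` tend to `1`. Finally `‖γ(t)‖ = t`, so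
`K ∩ B(0, r) = γ [0, r)`.
-/

open MeasureTheory Metric Set Filter
open scoped ENNReal Topology NNReal

section MetricCurve

variable {X : Type*} [MetricSpace X] [MeasurableSpace X] [BorelSpace X]

lemma hausdorffMeasure_one_singleton (x : X) : μH[1] ({x} : Set X) = 0 :=
  hausdorffMeasure_of_dimH_lt (d := 1) (by rw [dimH_singleton]; norm_num)

lemma hausdorffMeasure_one_insert (x : X) (s : Set X) : μH[1] (insert x s) = μH[1] s := by
  refine le_antisymm ?_ (measure_mono (subset_insert x s))
  calc μH[1] (insert x s) ≤ μH[1] {x} + μH[1] s := by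
        rw [insert_eq]; exact measure_union_le _ _
    _ = μH[1] s := by rw [hausdorffMeasure_one_singleton, zero_add]

lemma ofReal_dist_le_hausdorffMeasure_one {S : Set X} (hS : IsPreconnected S) {x y : X}
    (hx : x ∈ S) (hy : y ∈ S) : ENNReal.ofReal (dist x y) ≤ μH[1] S := by
  have hlip : LipschitzWith 1 (fun z => dist z x) := LipschitzWith.dist_left x
  have hsub : Icc 0 (dist y x) ⊆ (fun z => dist z x) '' S :=
    (hS.image _ hlip.continuous.continuousOn).ordConnected.out ⟨x, hx, dist_self x⟩ ⟨y, hy, rfl⟩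
  calc ENNReal.ofReal (dist x y) = μH[1] (Icc 0 (dist y x)) := by
        rw [hausdorffMeasure_real, Real.volume_Icc, dist_comm, sub_zero]
    _ ≤ μH[1] ((fun z => dist z x) '' S) := measure_mono hsub
    _ ≤ (1 : ℝ≥0) ^ (1 : ℝ) * μH[1] S := hlip.hausdorffMeasure_image_le zero_le_one S
    _ = μH[1] S := by simp

lemma LipschitzOnWith.hausdorffMeasure_one_image_le {f : ℝ → X} {K : ℝ≥0} {s : Set ℝ}
    (hf : LipschitzOnWith K f s) : μH[1] (f '' s) ≤ K * volume s := by
  simpa [hausdorffMeasure_real] using hf.hausdorffMeasure_image_le zero_le_one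

lemma hausdorffMeasure_one_image_Icc_add {γ : ℝ → X} {a b c : ℝ} (hab : a ≤ b) (hbc : b ≤ c)
    (hγ : ContinuousOn γ (Icc a c)) (hinj : InjOn γ (Icc a c)) :
    μH[1] (γ '' Icc a b) + μH[1] (γ '' Icc b c) = μH[1] (γ '' Icc a c) := by
  have hinter : γ '' Icc a b ∩ γ '' Icc b c = {γ b} := by
    rw [← hinj.image_inter (Icc_subset_Icc_right hbc) (Icc_subset_Icc_left hab),
      Icc_inter_Icc_eq_singleton hab hbc, image_singleton]
  have hmeas : MeasurableSet (γ '' Icc b c) :=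
    (isCompact_Icc.image_of_continuousOn
      (hγ.mono (Icc_subset_Icc_left hab))).isClosed.measurableSet
  rw [← measure_union_add_inter _ hmeas, hinter, ← image_union, Icc_union_Icc_eq_Icc hab hbc,
    hausdorffMeasure_one_singleton, add_zero]

noncomputable def imageLength (γ : ℝ → X) (a b : ℝ) : ℝ := (μH[1] (γ '' Icc a b)).toReal

lemma LipschitzOnWith.hausdorffMeasure_one_image_Icc_ne_top {γ : ℝ → X} {K : ℝ≥0} {a b : ℝ}
    (hγ : LipschitzOnWith K γ (Icc a b)) : μH[1] (γ '' Icc a b) ≠ ∞ :=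
  ne_top_of_le_ne_top (by simp [ENNReal.mul_eq_top]) hγ.hausdorffMeasure_one_image_le

lemma LipschitzOnWith.imageLength_le {γ : ℝ → X} {K : ℝ≥0} {a b : ℝ} (hab : a ≤ b)
    (hγ : LipschitzOnWith K γ (Icc a b)) : imageLength γ a b ≤ K * (b - a) := by
  refine ENNReal.toReal_le_of_le_ofReal (by positivity)
    (hγ.hausdorffMeasure_one_image_le.trans_eq ?_)
  rw [Real.volume_Icc, ENNReal.ofReal_mul K.coe_nonneg, ENNReal.ofReal_coe_nnreal]

lemma imageLength_self (γ : ℝ → X) (a : ℝ) : imageLength γ a a = 0 := by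
  simp [imageLength, hausdorffMeasure_one_singleton]

variable {γ : ℝ → X} {K : ℝ≥0} {a b : ℝ}

lemma imageLength_sub (hγ : LipschitzOnWith K γ (Icc a b)) (hinj : InjOn γ (Icc a b)) {y z : ℝ}
    (hay : a ≤ y) (hyz : y ≤ z) (hzb : z ≤ b) :
    imageLength γ a z - imageLength γ a y = imageLength γ y z := by
  have hsub : Icc a z ⊆ Icc a b := Icc_subset_Icc_right hzb
  simp only [imageLength]
  rw [← hausdorffMeasure_one_image_Icc_add hay hyz (hγ.continuousOn.mono hsub)
    (hinj.mono hsub), ENNReal.toReal_add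
    ((hγ.mono (Icc_subset_Icc_right (hyz.trans hzb))).hausdorffMeasure_one_image_Icc_ne_top)
    ((hγ.mono (Icc_subset_Icc hay hzb)).hausdorffMeasure_one_image_Icc_ne_top)]
  ring

lemma lipschitzOnWith_imageLength (hγ : LipschitzOnWith K γ (Icc a b))
    (hinj : InjOn γ (Icc a b)) : LipschitzOnWith K (imageLength γ a) (Icc a b) := by
  simpa using LipschitzOnWith.of_le_add_mul' (K : ℝ) fun y hy z hz => by
    rcases le_total y z with hyz | hzy
    · have := imageLength_sub hγ hinj hy.1 hyz hz.2
      have : 0 ≤ imageLength γ y z := ENNReal.toReal_nonneg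
      have : 0 ≤ (K : ℝ) * dist y z := mul_nonneg K.coe_nonneg dist_nonneg
      linarith
    · have := imageLength_sub hγ hinj hz.1 hzy hy.2
      have := (hγ.mono (Icc_subset_Icc hz.1 hy.2)).imageLength_le hzy
      rw [Real.dist_eq, abs_of_nonneg (sub_nonneg.2 hzy)]
      linarith

end MetricCurve

section NormedCurve

variable {E : Type*} [NormedAddCommGroup E] [NormedSpace ℝ E] [MeasurableSpace E] [BorelSpace E]

lemma abs_imageLength_sub_le {γ Γ' : ℝ → E} {v : E} {c d ε : ℝ}
    (hcd : c ≤ d) (hγ : ∀ t ∈ Icc c d, HasDerivWithinAt γ (Γ' t) (Icc c d) t)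
    (hv : ∀ t ∈ Icc c d, ‖Γ' t - v‖ ≤ ε) :
    |imageLength γ c d - ‖v‖ * (d - c)| ≤ ε * (d - c) := by
  have hε : 0 ≤ ε := (norm_nonneg _).trans (hv c (left_mem_Icc.2 hcd))
  have hlip : LipschitzOnWith (‖v‖ + ε).toNNReal γ (Icc c d) :=
    (convex_Icc c d).lipschitzOnWith_of_nnnorm_hasDerivWithin_le hγ fun t ht => by
      rw [← NNReal.coe_le_coe, coe_nnnorm, Real.coe_toNNReal _ (by positivity)]
      linarith [norm_le_insert' (Γ' t) v, hv t ht]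
  have hupper : μH[1] (γ '' Icc c d) ≤ ENNReal.ofReal ((‖v‖ + ε) * (d - c)) := by
    refine hlip.hausdorffMeasure_one_image_le.trans_eq ?_
    rw [Real.volume_Icc, ENNReal.ofReal_mul (by positivity)]; rfl
  have hchord : ‖(γ d - γ c) - (d - c) • v‖ ≤ ε * (d - c) := by
    have := (convex_Icc c d).norm_image_sub_le_of_norm_hasDerivWithin_le
      (f := fun t => γ t - t • v)
      (fun t ht => (hγ t ht).sub ((hasDerivWithinAt_id t _).smul_const v))
      (by simpa using hv) (left_mem_Icc.2 hcd) (right_mem_Icc.2 hcd)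
    rw [Real.norm_of_nonneg (sub_nonneg.2 hcd)] at this
    convert this using 2
    rw [sub_smul]; abel
  have hlower : ENNReal.ofReal ((‖v‖ - ε) * (d - c)) ≤ μH[1] (γ '' Icc c d) := by
    refine le_trans (ENNReal.ofReal_le_ofReal ?_) (ofReal_dist_le_hausdorffMeasure_one
      (isPreconnected_Icc.image γ hlip.continuousOn) (mem_image_of_mem γ (left_mem_Icc.2 hcd))
      (mem_image_of_mem γ (right_mem_Icc.2 hcd)))
    rw [dist_comm, dist_eq_norm]
    have := norm_sub_norm_le ((d - c) • v) ((d - c) • v - (γ d - γ c))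
    rw [norm_smul, Real.norm_of_nonneg (sub_nonneg.2 hcd), sub_sub_cancel, norm_sub_rev] at this
    nlinarith
  have hfin : μH[1] (γ '' Icc c d) ≠ ∞ := ne_top_of_le_ne_top ENNReal.ofReal_ne_top hupper
  rw [imageLength, abs_le]
  constructor
  · have := (ENNReal.ofReal_le_iff_le_toReal hfin).1 hlower
    linarith
  · have := ENNReal.toReal_le_of_le_ofReal (by positivity) hupper
    linarith

lemma hasDerivAt_imageLength {γ Γ' : ℝ → E} {K : ℝ≥0} {a b s : ℝ}
    (hγ : LipschitzOnWith K γ (Icc a b)) (hinj : InjOn γ (Icc a b))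
    (hd : ∀ t ∈ Ioo a b, HasDerivAt γ (Γ' t) t) (hc : ContinuousOn Γ' (Ioo a b))
    (hs : s ∈ Ioo a b) : HasDerivAt (imageLength γ a) ‖Γ' s‖ s := by
  rw [hasDerivAt_iff_isLittleO, Asymptotics.isLittleO_iff]
  intro ε hε
  have hIoo : Ioo a b ∈ 𝓝 s := Ioo_mem_nhds hs.1 hs.2
  have hnear : ∀ᶠ t in 𝓝 s, t ∈ Ioo a b ∧ ‖Γ' t - Γ' s‖ ≤ ε :=
    Filter.Eventually.and hIoo <| ((hc.continuousAt hIoo).eventually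
      (closedBall_mem_nhds _ hε)).mono fun t ht => by rwa [dist_eq_norm] at ht
  obtain ⟨δ, hδ, hball⟩ := Metric.eventually_nhds_iff_ball.1 hnear
  filter_upwards [ball_mem_nhds s hδ] with y hy
  have hsub : uIcc y s ⊆ ball s δ := by
    rw [Real.ball_eq_Ioo] at hy ⊢
    exact ordConnected_Ioo.uIcc_subset hy ⟨by linarith, by linarith⟩
  have hloc : ∀ {c d : ℝ}, c ≤ d → Icc c d ⊆ ball s δ →
      |imageLength γ c d - ‖Γ' s‖ * (d - c)| ≤ ε * (d - c) := fun hcd hcdδ =>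
    abs_imageLength_sub_le hcd (fun t ht => (hd t (hball t (hcdδ ht)).1).hasDerivWithinAt)
      (fun t ht => (hball t (hcdδ ht)).2)
  rw [Real.norm_eq_abs, Real.norm_eq_abs, smul_eq_mul]
  rcases le_total y s with hys | hsy
  · have hdiff := imageLength_sub hγ hinj (hball _ (hsub left_mem_uIcc)).1.1.le hys hs.2.le
    have := hloc hys (uIcc_of_le hys ▸ hsub)
    rw [abs_of_nonpos (sub_nonpos.2 hys)]
    rw [abs_le] at this ⊢
    constructor <;> linarith
  · have hdiff := imageLength_sub hγ hinj hs.1.le hsy (hball _ (hsub left_mem_uIcc)).1.2.le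
    have := hloc hsy (uIcc_of_ge hsy ▸ hsub)
    rw [abs_of_nonneg (sub_nonneg.2 hsy)]
    rw [abs_le] at this ⊢
    constructor <;> linarith

theorem hausdorffMeasure_image_Icc_eq_integral_norm_deriv {γ Γ' : ℝ → E} {K : ℝ≥0} {a b : ℝ}
    (hab : a ≤ b) (hγ : LipschitzOnWith K γ (Icc a b)) (hinj : InjOn γ (Icc a b))
    (hd : ∀ t ∈ Ioo a b, HasDerivAt γ (Γ' t) t) (hc : ContinuousOn Γ' (Ioo a b)) :
    μH[1] (γ '' Icc a b) = ENNReal.ofReal (∫ t in a..b, ‖Γ' t‖) := by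
  rcases hab.eq_or_lt with rfl | hab
  · simp [hausdorffMeasure_one_singleton]
  have hint : IntegrableOn (fun t => ‖Γ' t‖) (Icc a b) := by
    rw [integrableOn_Icc_iff_integrableOn_Ioo]
    refine IntegrableOn.of_bound measure_Ioo_lt_top
      (hc.norm.aestronglyMeasurable measurableSet_Ioo) K
      ((ae_restrict_iff' measurableSet_Ioo).2 ?_)
    exact .of_forall fun t ht => by
      simpa using (hd t ht).le_of_lipschitzOn (Icc_mem_nhds ht.1 ht.2) hγ
  set F : ℝ → ℝ := fun y => ∫ t in a..y, ‖Γ' t‖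
  have hFc : ContinuousOn F (Icc a b) := by
    rw [← uIcc_of_le hab.le] at hint ⊢
    exact intervalIntegral.continuousOn_primitive_interval hint
  have hF : ∀ s ∈ Ioo a b, HasDerivAt F ‖Γ' s‖ s := fun s hs =>
    intervalIntegral.integral_hasDerivAt_right
      ((intervalIntegrable_iff_integrableOn_Icc_of_le hs.1.le).2
        (hint.mono_set (Icc_subset_Icc_right hs.2.le)))
      (hc.norm.stronglyMeasurableAtFilter isOpen_Ioo s hs)
      (hc.norm.continuousAt (Ioo_mem_nhds hs.1 hs.2))
  obtain ⟨c, -, hslope⟩ := exists_hasDerivAt_eq_slope (imageLength γ a - F) 0 hab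
    ((lipschitzOnWith_imageLength hγ hinj).continuousOn.sub hFc)
    fun s hs => by simpa using (hasDerivAt_imageLength hγ hinj hd hc hs).sub (hF s hs)
  have hFa : F a = 0 := intervalIntegral.integral_same
  have hlen : imageLength γ a b = F b := by
    rw [Pi.zero_apply, eq_comm, div_eq_zero_iff, sub_eq_zero,
      or_iff_left (sub_pos.2 hab).ne'] at hslope
    simp only [Pi.sub_apply, imageLength_self, hFa] at hslope
    linarith
  rw [← ENNReal.ofReal_toReal hγ.hausdorffMeasure_one_image_Icc_ne_top]
  exact congrArg ENNReal.ofReal hlen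

end NormedCurve

lemma exists_le_of_continuousOn_Ioc_of_tendsto {f : ℝ → ℝ} {a b l : ℝ}
    (hf : ContinuousOn f (Ioc a b)) (hl : Tendsto f (𝓝[>] a) (𝓝 l)) :
    ∃ C, ∀ t ∈ Ioc a b, f t ≤ C := by
  obtain ⟨c, hac, hc⟩ := (mem_nhdsGT_iff_exists_Ioo_subset' (lt_add_one a)).1
    (hl.eventually (gt_mem_nhds (lt_add_one l)))
  obtain ⟨M, hM⟩ := isCompact_Icc.exists_bound_of_continuousOn (hf.mono (Icc_subset_Ioc hac le_rfl))
  refine ⟨max (l + 1) M, fun t ht => ?_⟩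
  rcases lt_or_ge t c with htc | hct
  · exact le_max_of_le_left (hc ⟨ht.1, htc⟩).le
  · exact le_max_of_le_right ((le_abs_self _).trans (hM t ⟨hct, ht.2⟩))

lemma tendsto_integral_div_sub_nhdsGT {g : ℝ → ℝ} {a b c : ℝ} (hab : a < b)
    (hg : ContinuousOn g (Ioo a b)) (hlim : Tendsto g (𝓝[>] a) (𝓝 c)) :
    Tendsto (fun r => (∫ t in a..r, g t) / (r - a)) (𝓝[>] a) (𝓝 c) := by
  have hderiv : HasDerivWithinAt (fun r => ∫ t in a..r, g t) c (Ici a) a :=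
    intervalIntegral.integral_hasDerivWithinAt_of_tendsto_ae_right (t := Ioi a) (by simp)
      (by simpa [nhdsWithin_Ioo_eq_nhdsGT hab] using
        hg.stronglyMeasurableAtFilter_nhdsWithin measurableSet_Ioo a) (hlim.mono_left inf_le_left)
  have := (hasDerivWithinAt_iff_tendsto_slope' (lt_irrefl a)).1 hderiv.Ioi_of_Ici
  refine this.congr fun r => ?_
  rw [slope_def_field, intervalIntegral.integral_same, sub_zero]

lemma ContinuousOn.closure_image_Ioc {Y : Type*} [TopologicalSpace Y] [T2Space Y] {f : ℝ → Y}
    {a b : ℝ} (hab : a < b) (hf : ContinuousOn f (Icc a b)) :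
    closure (f '' Ioc a b) = f '' Icc a b := by
  refine subset_antisymm (closure_minimal (image_mono Ioc_subset_Icc_self)
    (isCompact_Icc.image_of_continuousOn hf).isClosed) ?_
  rw [← closure_Ioc hab.ne] at hf ⊢
  exact hf.image_closure

section Spiral

open Real

variable (θ θ' : ℝ → ℝ)

noncomputable def spiral (t : ℝ) : EuclideanSpace ℝ (Fin 2) :=
  (WithLp.equiv 2 (Fin 2 → ℝ)).symm ![t * cos (θ t), t * sin (θ t)]

noncomputable def spiralDeriv (t : ℝ) : EuclideanSpace ℝ (Fin 2) :=
  (WithLp.equiv 2 (Fin 2 → ℝ)).symm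
    ![cos (θ t) - t * θ' t * sin (θ t), sin (θ t) + t * θ' t * cos (θ t)]

lemma norm_spiral (t : ℝ) : ‖spiral θ t‖ = |t| := by
  rw [spiral, EuclideanSpace.norm_eq, ← sqrt_sq_eq_abs]
  congr 1
  simp only [WithLp.equiv_symm_apply, PiLp.toLp_apply, Fin.sum_univ_two, Matrix.cons_val_zero,
    Matrix.cons_val_one, Real.norm_eq_abs, sq_abs]
  linear_combination t ^ 2 * sin_sq_add_cos_sq (θ t)

lemma norm_spiralDeriv (t : ℝ) : ‖spiralDeriv θ θ' t‖ = √(1 + t ^ 2 * θ' t ^ 2) := by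
  rw [spiralDeriv, EuclideanSpace.norm_eq]
  congr 1
  simp only [WithLp.equiv_symm_apply, PiLp.toLp_apply, Fin.sum_univ_two, Matrix.cons_val_zero,
    Matrix.cons_val_one, Real.norm_eq_abs, sq_abs]
  linear_combination (1 + t ^ 2 * θ' t ^ 2) * sin_sq_add_cos_sq (θ t)

lemma spiral_zero : spiral θ 0 = 0 := by
  simpa using norm_spiral θ 0

lemma continuousAt_spiral_zero : ContinuousAt (spiral θ) 0 := by
  rw [ContinuousAt, spiral_zero, tendsto_zero_iff_norm_tendsto_zero]
  simpa only [norm_spiral, abs_zero] using (continuous_abs.tendsto (0 : ℝ))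

variable {θ θ'}

lemma hasDerivAt_spiral {t : ℝ} (h : HasDerivAt θ (θ' t) t) :
    HasDerivAt (spiral θ) (spiralDeriv θ θ' t) t := by
  have hx : HasDerivAt (fun s => s * cos (θ s)) (cos (θ t) - t * θ' t * sin (θ t)) t :=
    ((hasDerivAt_id' t).mul h.cos).congr_deriv (by ring)
  have hy : HasDerivAt (fun s => s * sin (θ s)) (sin (θ t) + t * θ' t * cos (θ t)) t :=
    ((hasDerivAt_id' t).mul h.sin).congr_deriv (by ring)
  exact (EuclideanSpace.equiv (Fin 2) ℝ).symm.hasFDerivAt.comp_hasDerivAt t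
    (hasDerivAt_pi.2 fun i => by fin_cases i <;> simpa)

lemma continuousOn_spiralDeriv {s : Set ℝ} (hθ : ∀ t ∈ s, HasDerivAt θ (θ' t) t)
    (hθ' : ContinuousOn θ' s) : ContinuousOn (spiralDeriv θ θ') s := by
  have hθc : ContinuousOn θ s := fun t ht => (hθ t ht).continuousAt.continuousWithinAt
  refine (EuclideanSpace.equiv (Fin 2) ℝ).symm.continuous.comp_continuousOn
    (continuousOn_pi.2 fun i => ?_)
  fin_cases i
  · exact (continuous_cos.comp_continuousOn hθc).sub
      ((continuousOn_id.mul hθ').mul (continuous_sin.comp_continuousOn hθc))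
  · exact (continuous_sin.comp_continuousOn hθc).add
      ((continuousOn_id.mul hθ').mul (continuous_cos.comp_continuousOn hθc))

variable {b : ℝ}

lemma tendsto_norm_spiralDeriv (hsmall : Tendsto (fun t => t * θ' t) (𝓝[>] 0) (𝓝 0)) :
    Tendsto (fun t => ‖spiralDeriv θ θ' t‖) (𝓝[>] 0) (𝓝 1) := by
  have := ((hsmall.pow 2).const_add 1).sqrt
  simpa only [norm_spiralDeriv, mul_pow, zero_pow two_ne_zero, add_zero, sqrt_one] using this

lemma continuousOn_spiral_Icc (hθ : ∀ t ∈ Ioc 0 b, HasDerivAt θ (θ' t) t) :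
    ContinuousOn (spiral θ) (Icc 0 b) := by
  rintro t ⟨ht0, htb⟩
  rcases ht0.eq_or_lt with rfl | ht0
  · exact (continuousAt_spiral_zero θ).continuousWithinAt
  · exact (hasDerivAt_spiral (hθ t ⟨ht0, htb⟩)).continuousAt.continuousWithinAt

lemma exists_lipschitzOnWith_spiral (hb : 0 < b) (hθ : ∀ t ∈ Ioc 0 b, HasDerivAt θ (θ' t) t)
    (hθ' : ContinuousOn θ' (Ioc 0 b)) (hsmall : Tendsto (fun t => t * θ' t) (𝓝[>] 0) (𝓝 0)) :
    ∃ K, LipschitzOnWith K (spiral θ) (Icc 0 b) := by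
  obtain ⟨C, hC⟩ := exists_le_of_continuousOn_Ioc_of_tendsto
    (continuousOn_spiralDeriv hθ hθ').norm (tendsto_norm_spiralDeriv hsmall)
  refine ⟨C.toNNReal, ?_⟩
  rw [← closure_Ioc hb.ne]
  refine LipschitzOnWith.closure (closure_Ioc hb.ne ▸ continuousOn_spiral_Icc hθ)
    ((convex_Ioc 0 b).lipschitzOnWith_of_nnnorm_hasDerivWithin_le
      (fun t ht => (hasDerivAt_spiral (hθ t ht)).hasDerivWithinAt) fun t ht => ?_)
  rw [← NNReal.coe_le_coe, coe_nnnorm]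
  exact (hC t ht).trans (Real.le_coe_toNNReal C)

lemma injOn_spiral_Icc (hb : 0 ≤ b) (hinj : InjOn (spiral θ) (Ioc 0 b)) :
    InjOn (spiral θ) (Icc 0 b) := by
  rw [← Ioc_insert_left hb, injOn_insert (by simp)]
  refine ⟨hinj, fun ⟨t, ht, h⟩ => ht.1.ne' ?_⟩
  simpa [spiral_zero, norm_spiral] using congrArg norm h

lemma spiral_image_Icc_inter_ball {r : ℝ} (hr : r ≤ b) :
    spiral θ '' Icc 0 b ∩ ball 0 r = spiral θ '' Ico 0 r := by
  ext x
  simp only [mem_inter_iff, mem_image, mem_ball_zero_iff]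
  constructor
  · rintro ⟨⟨t, ht, rfl⟩, htr⟩
    rw [norm_spiral, abs_of_nonneg ht.1] at htr
    exact ⟨t, ⟨ht.1, htr⟩, rfl⟩
  · rintro ⟨t, ht, rfl⟩
    rw [norm_spiral, abs_of_nonneg ht.1]
    exact ⟨⟨t, ⟨ht.1, ht.2.le.trans hr⟩, rfl⟩, ht.2⟩

end Spiral

/-- For a C¹ spiral `γ(t) = t (cos θ(t), sin θ(t))` with `t θ'(t) → 0` as `t → 0⁺`
(and `γ` injective on `(0,1]`), the set `K = closure(γ((0,1])) ∪ {0}` satisfies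
`H¹(K ∩ B(0,r)) = ∫₀^r √(1 + t²θ'(t)²) dt = r + o(r)`; in particular `K` has
Hausdorff 1-density `1/2` at the origin. -/
theorem stmt3
    (θ θ' : ℝ → ℝ)
    (hderiv : ∀ t ∈ Set.Ioc (0:ℝ) 1, HasDerivAt θ (θ' t) t)
    (hcont : ContinuousOn θ' (Set.Ioc (0:ℝ) 1))
    (hsmall : Tendsto (fun t => t * θ' t) (𝓝[>] (0:ℝ)) (𝓝 0))
    (γ : ℝ → EuclideanSpace ℝ (Fin 2))
    (hγ : ∀ t, γ t = (WithLp.equiv 2 (Fin 2 → ℝ)).symm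
      ![t * Real.cos (θ t), t * Real.sin (θ t)])
    (hinj : Set.InjOn γ (Set.Ioc (0:ℝ) 1))
    (K : Set (EuclideanSpace ℝ (Fin 2)))
    (hK : K = closure (γ '' Set.Ioc (0:ℝ) 1) ∪ {0}) :
    (∀ r ∈ Set.Ioc (0:ℝ) 1,
      μH[1] (K ∩ Metric.ball 0 r)
        = ENNReal.ofReal (∫ t in Set.Ioc (0:ℝ) r, Real.sqrt (1 + t^2 * (θ' t)^2))) ∧
    Tendsto (fun r : ℝ => μH[1] (K ∩ Metric.ball 0 r) / ENNReal.ofReal (2 * r))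
      (𝓝[>] (0:ℝ)) (𝓝 (1/2)) := by
  obtain rfl : γ = spiral θ := funext hγ
  have hK' : K = spiral θ '' Icc 0 1 := by
    rw [hK, (continuousOn_spiral_Icc hderiv).closure_image_Ioc one_pos, union_eq_left,
      singleton_subset_iff]
    exact ⟨0, left_mem_Icc.2 zero_le_one, spiral_zero θ⟩
  obtain ⟨L, hL⟩ := exists_lipschitzOnWith_spiral one_pos hderiv hcont hsmall
  have hmeasure : ∀ r ∈ Ioc (0 : ℝ) 1, μH[1] (K ∩ ball 0 r)
      = ENNReal.ofReal (∫ t in (0)..r, ‖spiralDeriv θ θ' t‖) := by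
    intro r hr
    have hsub : Icc 0 r ⊆ Icc 0 1 := Icc_subset_Icc_right hr.2
    rw [hK', spiral_image_Icc_inter_ball hr.2, ← hausdorffMeasure_one_insert (spiral θ r),
      ← image_insert_eq, Ico_insert_right hr.1.le]
    exact hausdorffMeasure_image_Icc_eq_integral_norm_deriv hr.1.le (hL.mono hsub)
      ((injOn_spiral_Icc zero_le_one hinj).mono hsub)
      (fun t ht => hasDerivAt_spiral (hderiv t ⟨ht.1, ht.2.le.trans hr.2⟩))
      ((continuousOn_spiralDeriv hderiv hcont).mono fun t ht => ⟨ht.1, ht.2.le.trans hr.2⟩)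
  simp only [← norm_spiralDeriv θ θ']
  refine ⟨fun r hr => by rw [hmeasure r hr, intervalIntegral.integral_of_le hr.1.le], ?_⟩
  have hdensity := ENNReal.tendsto_ofReal ((tendsto_integral_div_sub_nhdsGT one_pos
    ((continuousOn_spiralDeriv hderiv hcont).norm.mono Ioo_subset_Ioc_self)
    (tendsto_norm_spiralDeriv hsmall)).div_const 2)
  rw [ENNReal.ofReal_div_of_pos two_pos, ENNReal.ofReal_one, ENNReal.ofReal_ofNat] at hdensity
  refine hdensity.congr' ?_
  filter_upwards [Ioo_mem_nhdsGT one_pos] with r hr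
  rw [hmeasure r ⟨hr.1, hr.2.le⟩, ← ENNReal.ofReal_div_of_pos (by linarith [hr.1]), sub_zero,
    div_div, mul_comm]
end

section
/- (Gronwall-type lemma, version 1) Let α ∈ (0,1), C > 0, and let E : (0,r₀] → [0,∞) be absolutely continuous, differentiable a.e., satisfying E(r) ≤ (r + C·r^{1+α})·E'(r) for a.e. r ∈ (0,r₀]. Then the function r ↦ (E(r)/r)·(1 + C·r^α)^{1/α} is nondecreasing on (0,r₀], and lim_{r→0⁺} E(r)/r exists and is finite, bounded by (E(r₀)/r₀)·(1 + C·r₀^α)^{1/α}. -/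
open MeasureTheory Set Filter intervalIntegral
open scoped Topology

/-!
Since `E ≥ 0` and `r + C r^{1+α} > 0`, the differential inequality forces `E' ≥ 0` a.e., so `E` is
monotone; hence `E'` is integrable and `E` is absolutely continuous on every `[s, t] ⊆ (0, r₀]`.
The weight `w r = (1 + C r^α)^{1/α} / r` satisfies `w' = -w / (r + C r^{1+α})`, so
`(E w)' = w (E' - E / (r + C r^{1+α})) ≥ 0` a.e. and integrating gives the monotonicity of `E w`.
Being monotone and nonnegative, `E w` has a limit at `0⁺` bounded by its value at `r₀`, and
`E r / r = E w / (1 + C r^α)^{1/α}` with denominator tending to `1`.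
-/

theorem AbsolutelyContinuousOnInterval.congr {f g : ℝ → ℝ} {a b : ℝ}
    (hf : AbsolutelyContinuousOnInterval f a b) (hfg : EqOn f g (uIcc a b)) :
    AbsolutelyContinuousOnInterval g a b := by
  refine hf.congr' ?_
  filter_upwards [mem_inf_of_right (mem_principal_self _)] with I hI
  refine Finset.sum_congr rfl fun i hi => ?_
  rw [hfg (hI.1 i hi).1, hfg (hI.1 i hi).2]

theorem absolutelyContinuousOnInterval_of_sub_eq_integral {f F : ℝ → ℝ} {a b : ℝ}
    (hF : IntervalIntegrable F volume a b) (hf : ∀ x ∈ uIcc a b, f x - f a = ∫ u in a..x, F u) :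
    AbsolutelyContinuousOnInterval f a b := by
  have hconst : AbsolutelyContinuousOnInterval (fun _ => f a) a b :=
    contDiffOn_const.absolutelyContinuousOnInterval
  refine (hconst.add (hF.absolutelyContinuousOnInterval_intervalIntegral left_mem_uIcc)).congr ?_
  intro x hx
  simp only [Pi.add_apply]
  linarith [hf x hx]

theorem monotoneOn_of_sub_eq_integral_deriv {f : ℝ → ℝ} {S : Set ℝ} [S.OrdConnected]
    (hf : ∀ s ∈ S, ∀ t ∈ S, s ≤ t → f t - f s = ∫ x in s..t, deriv f x)
    (hderiv : 0 ≤ᵐ[volume.restrict S] deriv f) :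
    MonotoneOn f S := by
  intro s hs t ht hst
  have : 0 ≤ ∫ x in s..t, deriv f x := by
    refine integral_nonneg_of_ae_restrict hst ?_
    exact ae_restrict_of_ae_restrict_of_subset (OrdConnected.out ‹_› hs ht) hderiv
  linarith [hf s hs t ht hst]

/-- `exp (-h r)` for the antiderivative `h r = log (r / (1 + C r^α)^{1/α})` of
`1 / (r + C r^{1+α})`. -/
noncomputable def gronwallWeight (α C r : ℝ) : ℝ := (1 + C * r ^ α) ^ (1 / α) / r

lemma one_add_mul_rpow_pos {α C r : ℝ} (hC : 0 ≤ C) (hr : 0 < r) : 0 < 1 + C * r ^ α := by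
  have := Real.rpow_pos_of_pos hr α
  positivity

lemma gronwallWeight_pos {α C r : ℝ} (hC : 0 ≤ C) (hr : 0 < r) : 0 < gronwallWeight α C r :=
  div_pos (Real.rpow_pos_of_pos (one_add_mul_rpow_pos hC hr) _) hr

lemma hasDerivAt_gronwallWeight {α C r : ℝ} (hα : α ≠ 0) (hC : 0 ≤ C) (hr : 0 < r) :
    HasDerivAt (gronwallWeight α C)
      (-(gronwallWeight α C r / (r + C * r ^ (1 + α)))) r := by
  have hA := one_add_mul_rpow_pos (α := α) hC hr
  have hbase : HasDerivAt (fun y : ℝ => 1 + C * y ^ α) (C * (α * r ^ (α - 1))) r := by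
    simpa using ((Real.hasDerivAt_rpow_const (p := α) (Or.inl hr.ne')).const_mul C).const_add 1
  refine ((hbase.rpow_const (p := 1 / α) (Or.inl hA.ne')).div (hasDerivAt_id' r)
    hr.ne').congr_deriv ?_
  rw [gronwallWeight, Real.rpow_sub hr, Real.rpow_sub hA, Real.rpow_add hr, Real.rpow_one,
    Real.rpow_one]
  field_simp
  ring

lemma contDiffOn_gronwallWeight {α C : ℝ} (hC : 0 ≤ C) :
    ContDiffOn ℝ 1 (gronwallWeight α C) (Ioi 0) := by
  intro x (hx : 0 < x)
  have hA := one_add_mul_rpow_pos (α := α) hC hx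
  unfold gronwallWeight
  fun_prop (disch := first | exact hx.ne' | exact hA.ne')

theorem monotoneOn_mul_gronwallWeight {α C r₀ : ℝ} (hα : α ≠ 0) (hC : 0 ≤ C) {E : ℝ → ℝ}
    (hnonneg : ∀ r ∈ Ioc 0 r₀, 0 ≤ E r)
    (hAC : ∀ s ∈ Ioc 0 r₀, ∀ t ∈ Ioc 0 r₀, s ≤ t → E t - E s = ∫ x in s..t, deriv E x)
    (hineq : ∀ᵐ r ∂(volume.restrict (Ioc 0 r₀)), E r ≤ (r + C * r ^ (1 + α)) * deriv E r) :
    MonotoneOn (fun r => E r * gronwallWeight α C r) (Ioc 0 r₀) := by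
  have hD : ∀ r : ℝ, 0 < r → 0 < r + C * r ^ (1 + α) := fun r hr => by
    have := Real.rpow_pos_of_pos hr (1 + α)
    positivity
  have hderiv : 0 ≤ᵐ[volume.restrict (Ioc 0 r₀)] deriv E := by
    filter_upwards [hineq, ae_restrict_mem measurableSet_Ioc] with r hr hmem
    exact nonneg_of_mul_nonneg_right ((hnonneg r hmem).trans hr) (hD r hmem.1)
  have hEmono := monotoneOn_of_sub_eq_integral_deriv hAC hderiv
  intro s hs t ht hst
  have hsub : uIcc s t ⊆ Ioc 0 r₀ := uIcc_of_le hst ▸ ordConnected_Ioc.out hs ht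
  have hEac : AbsolutelyContinuousOnInterval E s t :=
    absolutelyContinuousOnInterval_of_sub_eq_integral (hEmono.mono hsub).intervalIntegrable_deriv
      fun x hx => hAC s hs x (hsub hx) (uIcc_of_le hst ▸ hx).1
  have hwac : AbsolutelyContinuousOnInterval (gronwallWeight α C) s t :=
    ((contDiffOn_gronwallWeight hC).mono
      (hsub.trans Ioc_subset_Ioi_self)).absolutelyContinuousOnInterval
  rw [← sub_nonneg, ← hEac.integral_deriv_mul_eq_sub hwac]
  refine integral_nonneg_of_ae_restrict hst ?_
  filter_upwards [ae_restrict_of_ae_restrict_of_subset (uIcc_of_le hst ▸ hsub) hineq,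
    ae_restrict_mem measurableSet_Icc] with x hx hxI
  have hx0 : 0 < x := (hsub (uIcc_of_le hst ▸ hxI)).1
  rw [(hasDerivAt_gronwallWeight hα hC hx0).deriv]
  have hw := gronwallWeight_pos (α := α) hC hx0
  have hDx := hD x hx0
  calc 0 ≤ gronwallWeight α C x / (x + C * x ^ (1 + α)) *
        ((x + C * x ^ (1 + α)) * deriv E x - E x) :=
        mul_nonneg (div_pos hw hDx).le (sub_nonneg.2 hx)
    _ = _ := by field_simp; ring

theorem exists_tendsto_nhdsGT_le_of_monotoneOn {g : ℝ → ℝ} {a b : ℝ} (hab : a < b)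
    (hg : MonotoneOn g (Ioc a b)) (hbdd : BddBelow (g '' Ioc a b)) :
    ∃ l, Tendsto g (𝓝[>] a) (𝓝 l) ∧ l ≤ g b := by
  have hlim := (hg.mono Ioo_subset_Ioc_self).tendsto_nhdsWithin_Ioo_right (nonempty_Ioo.2 hab)
    (hbdd.mono (image_mono Ioo_subset_Ioc_self))
  refine ⟨_, hlim, le_of_tendsto hlim ?_⟩
  filter_upwards [Ioc_mem_nhdsGT hab] with r hr using hg hr ⟨hab, le_rfl⟩ hr.2

lemma tendsto_one_add_mul_rpow_rpow_nhdsGT_zero {α : ℝ} (hα : 0 < α) (C : ℝ) :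
    Tendsto (fun r : ℝ => (1 + C * r ^ α) ^ (1 / α)) (𝓝[>] 0) (𝓝 1) := by
  have : ContinuousAt (fun r : ℝ => (1 + C * r ^ α) ^ (1 / α)) 0 := by
    fun_prop (disch := first | exact Or.inr hα.le | simp [Real.zero_rpow hα.ne'])
  simpa [Real.zero_rpow hα.ne'] using this.tendsto.mono_left nhdsWithin_le_nhds

/-- (Gronwall-type lemma, version 1.) If `E : (0,r₀] → [0,∞)` is absolutely
continuous and satisfies `E(r) ≤ (r + C r^{1+α}) E'(r)` a.e. for some `α ∈ (0,1)`,
`C > 0`, then `r ↦ (E(r)/r)(1 + C r^α)^{1/α}` is nondecreasing on `(0,r₀]`, and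
`lim_{r→0⁺} E(r)/r` exists, is finite, and is at most `(E(r₀)/r₀)(1+C r₀^α)^{1/α}`. -/
theorem stmt9
    (α C r₀ : ℝ) (hα : α ∈ Set.Ioo (0:ℝ) 1) (hC : 0 < C) (hr₀ : 0 < r₀)
    (E : ℝ → ℝ)
    (hnonneg : ∀ r ∈ Set.Ioc 0 r₀, 0 ≤ E r)
    (hAC : ∀ s ∈ Set.Ioc 0 r₀, ∀ t ∈ Set.Ioc 0 r₀, s ≤ t →
      E t - E s = ∫ x in s..t, deriv E x)
    (hineq : ∀ᵐ r ∂(volume.restrict (Set.Ioc 0 r₀)),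
      E r ≤ (r + C * r ^ (1 + α)) * deriv E r) :
    MonotoneOn (fun r => (E r / r) * (1 + C * r ^ α) ^ (1/α)) (Set.Ioc 0 r₀) ∧
    ∃ l : ℝ, Tendsto (fun r => E r / r) (𝓝[>] (0:ℝ)) (𝓝 l) ∧
      l ≤ (E r₀ / r₀) * (1 + C * r₀ ^ α) ^ (1/α) := by
  have hweighted : ∀ r, E r * gronwallWeight α C r = (E r / r) * (1 + C * r ^ α) ^ (1/α) :=
    fun r => by rw [gronwallWeight]; ring
  have hmono := monotoneOn_mul_gronwallWeight hα.1.ne' hC.le hnonneg hAC hineq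
  simp only [hweighted] at hmono
  refine ⟨hmono, ?_⟩
  have hbdd : BddBelow ((fun r => (E r / r) * (1 + C * r ^ α) ^ (1/α)) '' Ioc 0 r₀) := by
    refine ⟨0, ?_⟩
    rintro _ ⟨r, hr, rfl⟩
    exact mul_nonneg (div_nonneg (hnonneg r hr) hr.1.le)
      (Real.rpow_nonneg (one_add_mul_rpow_pos hC.le hr.1).le _)
  obtain ⟨l, hl, hle⟩ := exists_tendsto_nhdsGT_le_of_monotoneOn hr₀ hmono hbdd
  refine ⟨l, ?_, hle⟩
  have hquot := hl.div (tendsto_one_add_mul_rpow_rpow_nhdsGT_zero hα.1 C) one_ne_zero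
  rw [div_one] at hquot
  refine hquot.congr' ?_
  filter_upwards [self_mem_nhdsWithin] with r hr
  exact mul_div_cancel_right₀ _ (Real.rpow_pos_of_pos (one_add_mul_rpow_pos hC.le hr) _).ne'
end
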